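/- arXiv:1512.02302 — 2 statements merged into one kernel-verified Lean document; each statement's English description precedes it below -/
import Mathlib

section
/- (Theorem 1, Item 2) Suppose there exist a continuously differentiable V : J × ℝⁿ → [0,∞), two class-K∞ functions α₁, α₂ (independent of t), and a piecewise continuous μ : J → ℝ such that α₁(|x|) ≤ V(t,x) ≤ α₂(|x|) and ∂V/∂t(t,x) + ∇ₓV(t,x)·f(t,x) ≤ μ(t)V(t,x) for all (t,x) ∈ J × ℝⁿ. If μ is uniformly exponentially stable with constants α > 0 and β ≥ 0 (i.e., ∫_{t₀}^{t} μ(s) ds ≤ −α(t−t₀) + β for all t ≥ t₀ ∈ J), then every solution of ẋ = f(t,x) satisfies |x(t)| ≤ α₁⁻¹( α₂(|x(t₀)|)·e^{β}·e^{−α(t−t₀)} ) for all t ≥ t₀ ∈ J; in particular the system is globally uniformly asymptotically stable. -/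
open Filter MeasureTheory Set Real

/-!
Along a solution, `w(t) = V(t, x(t))` is nonnegative and satisfies `w' ≤ μ w`. Where `w > 0`,
`log w` has derivative at most `μ`, so `w(t) ≤ w(t₀) exp (∫_{t₀}^{t} μ)`. A zero of `w` is never
left: if `s` is the last zero before `t`, the bound holds from every `s' ∈ (s, t]`, and letting
`s' → s` gives `w(t) ≤ w(s) exp (∫_s^t μ) = 0`. The uniform exponential stability of `μ` and the
sandwich `α₁(|x|) ≤ V ≤ α₂(|x|)` then give `α₁(|x(t)|) ≤ α₂(|x(t₀)|) e^β e^{-α(t-t₀)}`, and `α₁`,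
being a continuous increasing surjection of `[0, ∞)` onto itself, can be inverted.
-/

section Gronwall

variable {W W' μ : ℝ → ℝ} {a b : ℝ}

theorem le_mul_exp_integral_of_pos (hab : a ≤ b) (hcont : ContinuousOn W (Icc a b))
    (hderiv : ∀ u ∈ Ioo a b, HasDerivAt W (W' u) u) (hpos : ∀ u ∈ Icc a b, 0 < W u)
    (hle : ∀ u ∈ Ioo a b, W' u ≤ μ u * W u) (hμ : IntervalIntegrable μ volume a b) :
    W b ≤ W a * exp (∫ u in a..b, μ u) := by
  have hlog : log (W b) - log (W a) ≤ ∫ u in a..b, μ u :=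
    intervalIntegral.sub_le_integral_of_hasDeriv_right_of_le hab
      (hcont.log fun u hu => (hpos u hu).ne')
      (fun u hu => ((hderiv u hu).log (hpos u (Ioo_subset_Icc_self hu)).ne').hasDerivWithinAt)
      ((intervalIntegrable_iff_integrableOn_Icc_of_le hab).1 hμ)
      (fun u hu => (div_le_iff₀ (hpos u (Ioo_subset_Icc_self hu))).2 (hle u hu))
  calc W b = exp (log (W b)) := (exp_log (hpos b (right_mem_Icc.2 hab))).symm
    _ ≤ exp (log (W a) + ∫ u in a..b, μ u) := exp_le_exp.2 (by linarith)
    _ = W a * exp (∫ u in a..b, μ u) := by rw [exp_add, exp_log (hpos a (left_mem_Icc.2 hab))]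

theorem eq_zero_of_hasDerivAt_le_mul_of_eq_zero (hab : a ≤ b) (hcont : ContinuousOn W (Icc a b))
    (hderiv : ∀ u ∈ Ioo a b, HasDerivAt W (W' u) u) (hnn : ∀ u ∈ Icc a b, 0 ≤ W u)
    (hle : ∀ u ∈ Ioo a b, W' u ≤ μ u * W u) (hμ : IntervalIntegrable μ volume a b)
    (ha : W a = 0) : W b = 0 := by
  set Z := Icc a b ∩ W ⁻¹' {0}
  have hZbdd : BddAbove Z := ⟨b, fun u hu => hu.1.2⟩
  have hsZ : sSup Z ∈ Z :=
    (hcont.preimage_isClosed_of_isClosed isClosed_Icc isClosed_singleton).csSup_mem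
      ⟨a, left_mem_Icc.2 hab, ha⟩ hZbdd
  have hupper : ∀ u ∈ Z, u ≤ sSup Z := fun u hu => le_csSup hZbdd hu
  generalize sSup Z = s at hsZ hupper
  obtain ⟨⟨has, hsb⟩, hWs⟩ := hsZ
  rcases hsb.eq_or_lt with rfl | hsb
  · exact hWs
  have hsub : Ioc s b ⊆ Icc a b := fun u hu => ⟨has.trans hu.1.le, hu.2⟩
  have hpos : ∀ u ∈ Ioc s b, 0 < W u := fun u hu =>
    (hnn u (hsub hu)).lt_of_ne' fun h => (hupper u ⟨hsub hu, h⟩).not_gt hu.1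
  have hbound : ∀ u ∈ Ioc s b, W b ≤ W u * exp (∫ v in u..b, μ v) := fun u hu =>
    le_mul_exp_integral_of_pos hu.2 (hcont.mono (Icc_subset_Icc_left (has.trans hu.1.le)))
      (fun v hv => hderiv v ⟨(has.trans hu.1.le).trans_lt hv.1, hv.2⟩)
      (fun v hv => hpos v ⟨hu.1.trans_le hv.1, hv.2⟩)
      (fun v hv => hle v ⟨(has.trans hu.1.le).trans_lt hv.1, hv.2⟩)
      (hμ.mono_set (uIcc_subset_uIcc (Icc_subset_uIcc (hsub hu)) right_mem_uIcc))
  have hg : ContinuousOn (fun u => W u * exp (∫ v in u..b, μ v)) (Icc a b) := by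
    have hprim : ContinuousOn (fun u => ∫ v in u..b, μ v) (uIcc a b) :=
      intervalIntegral.continuousOn_primitive_interval_left
        ((intervalIntegrable_iff' (by finiteness)).1 hμ)
    rw [uIcc_of_le hab] at hprim
    exact hcont.mul hprim.rexp
  have hWb : W b ≤ W s * exp (∫ v in s..b, μ v) :=
    ContinuousWithinAt.closure_le (g := fun u => W u * exp (∫ v in u..b, μ v))
      (by rw [closure_Ioc hsb.ne]; exact left_mem_Icc.2 hsb.le) continuousWithinAt_const
      ((hg s ⟨has, hsb.le⟩).mono hsub) hbound
  rw [hWs, zero_mul] at hWb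
  exact le_antisymm hWb (hnn b (right_mem_Icc.2 hab))

theorem le_mul_exp_integral_of_nonneg (hab : a ≤ b) (hcont : ContinuousOn W (Icc a b))
    (hderiv : ∀ u ∈ Ioo a b, HasDerivAt W (W' u) u) (hnn : ∀ u ∈ Icc a b, 0 ≤ W u)
    (hle : ∀ u ∈ Ioo a b, W' u ≤ μ u * W u) (hμ : IntervalIntegrable μ volume a b) :
    W b ≤ W a * exp (∫ u in a..b, μ u) := by
  by_cases hpos : ∀ u ∈ Icc a b, 0 < W u
  · exact le_mul_exp_integral_of_pos hab hcont hderiv hpos hle hμ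
  push Not at hpos
  obtain ⟨z, ⟨haz, hzb⟩, hWz⟩ := hpos
  have hWb : W b = 0 :=
    eq_zero_of_hasDerivAt_le_mul_of_eq_zero hzb (hcont.mono (Icc_subset_Icc_left haz))
      (fun u hu => hderiv u ⟨haz.trans_lt hu.1, hu.2⟩)
      (fun u hu => hnn u ⟨haz.trans hu.1, hu.2⟩) (fun u hu => hle u ⟨haz.trans_lt hu.1, hu.2⟩)
      (hμ.mono_set (uIcc_subset_uIcc (Icc_subset_uIcc ⟨haz, hzb⟩) right_mem_uIcc))
      (le_antisymm hWz (hnn z ⟨haz, hzb⟩))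
  rw [hWb]
  exact mul_nonneg (hnn a (left_mem_Icc.2 hab)) (exp_pos _).le

end Gronwall

theorem hasDerivAt_apply_curve {E F : Type*} [NormedAddCommGroup E] [NormedSpace ℝ E]
    [NormedAddCommGroup F] [NormedSpace ℝ F] {V : ℝ → E → F} {x : ℝ → E} {v : E} {t : ℝ}
    (hV : DifferentiableAt ℝ (fun p : ℝ × E => V p.1 p.2) (t, x t)) (hx : HasDerivAt x v t) :
    HasDerivAt (fun u => V u (x u)) (fderiv ℝ (fun p : ℝ × E => V p.1 p.2) (t, x t) (1, v)) t :=
  HasFDerivAt.comp_hasDerivAt (f := fun u => (u, x u)) t hV.hasFDerivAt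
    ((hasDerivAt_id t).prodMk hx)

theorem le_of_apply_le_of_leftInvOn {α δ : Type*} [ConditionallyCompleteLinearOrder α]
    [TopologicalSpace α] [OrderTopology α] [DenselyOrdered α] [LinearOrder δ]
    [TopologicalSpace δ] [OrderClosedTopology δ] {φ : α → δ} {ψ : δ → α} {a r : α} {c : δ}
    (hcont : ContinuousOn φ (Ici a)) (hmono : StrictMonoOn φ (Ici a))
    (htop : Tendsto φ atTop atTop) (hinv : LeftInvOn ψ φ (Ici a)) (hr : a ≤ r) (hrc : φ r ≤ c) :
    r ≤ ψ c := by
  have hc : c ∈ Ici (φ a) := (hmono.monotoneOn self_mem_Ici hr hr).trans hrc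
  obtain ⟨y, hy, rfl⟩ := intermediate_value_Ici hcont htop hc
  rw [hinv hy]
  exact (hmono.le_iff_le hr hy).1 hrc

theorem stmt5_general (tsharp : ℝ) (n : ℕ)
    (f : ℝ → EuclideanSpace ℝ (Fin n) → EuclideanSpace ℝ (Fin n))
    (V : ℝ → EuclideanSpace ℝ (Fin n) → ℝ)
    (hV_C1 : ContDiff ℝ 1 fun p : ℝ × EuclideanSpace ℝ (Fin n) => V p.1 p.2)
    (hV_nonneg : ∀ t ∈ Set.Ici tsharp, ∀ x : EuclideanSpace ℝ (Fin n), 0 ≤ V t x)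
    (α₁ α₂ : ℝ → ℝ)
    (hα₁K : ContinuousOn α₁ (Set.Ici 0) ∧ StrictMonoOn α₁ (Set.Ici 0) ∧ α₁ 0 = 0 ∧
        Filter.Tendsto α₁ Filter.atTop Filter.atTop)
    -- `α₁inv` is the inverse of `α₁` on `[0,∞)`
    (α₁inv : ℝ → ℝ)
    (hα₁inv : Set.InvOn α₁inv α₁ (Set.Ici 0) (Set.Ici 0))
    (μ : ℝ → ℝ)
    (hμ_int : ∀ a b : ℝ, IntervalIntegrable μ MeasureTheory.volume a b)
    (α β : ℝ)
    (hμ_ues : ∀ t₀ ∈ Set.Ici tsharp, ∀ t ≥ t₀,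
        (∫ s in t₀..t, μ s) ≤ -α * (t - t₀) + β)
    (hsandwich : ∀ t ∈ Set.Ici tsharp, ∀ x : EuclideanSpace ℝ (Fin n),
        α₁ ‖x‖ ≤ V t x ∧ V t x ≤ α₂ ‖x‖)
    (hderiv : ∀ t ∈ Set.Ici tsharp, ∀ x : EuclideanSpace ℝ (Fin n),
        (fderiv ℝ (fun p : ℝ × EuclideanSpace ℝ (Fin n) => V p.1 p.2) (t, x)) (1, f t x)
          ≤ μ t * V t x) :
    ∀ t₀ ∈ Set.Ici tsharp, ∀ x : ℝ → EuclideanSpace ℝ (Fin n),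
      (∀ t ≥ t₀, HasDerivAt x (f t (x t)) t) →
      ∀ t ≥ t₀, ‖x t‖ ≤ α₁inv (α₂ ‖x t₀‖ * Real.exp β * Real.exp (-α * (t - t₀))) := by
  intro t₀ ht₀ x hx t ht
  have hW : ∀ u ≥ t₀, HasDerivAt (fun u => V u (x u))
      (fderiv ℝ (fun p : ℝ × EuclideanSpace ℝ (Fin n) => V p.1 p.2) (u, x u) (1, f u (x u))) u :=
    fun u hu => hasDerivAt_apply_curve (hV_C1.differentiable one_ne_zero _) (hx u hu)
  have hV_t₀ : V t₀ (x t₀) ≤ α₂ ‖x t₀‖ := (hsandwich t₀ ht₀ (x t₀)).2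
  have hdecay : V t (x t) ≤ α₂ ‖x t₀‖ * exp β * exp (-α * (t - t₀)) :=
    calc V t (x t) ≤ V t₀ (x t₀) * exp (∫ s in t₀..t, μ s) :=
          le_mul_exp_integral_of_nonneg ht
            (fun u hu => (hW u hu.1).continuousAt.continuousWithinAt)
            (fun u hu => hW u hu.1.le) (fun u hu => hV_nonneg u (le_trans ht₀ hu.1) (x u))
            (fun u hu => hderiv u (le_trans ht₀ hu.1.le) (x u)) (hμ_int t₀ t)
      _ ≤ α₂ ‖x t₀‖ * exp (-α * (t - t₀) + β) :=
          mul_le_mul hV_t₀ (exp_le_exp.2 (hμ_ues t₀ ht₀ t ht)) (exp_pos _).le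
            ((hV_nonneg t₀ ht₀ (x t₀)).trans hV_t₀)
      _ = α₂ ‖x t₀‖ * exp β * exp (-α * (t - t₀)) := by rw [exp_add]; ring
  exact le_of_apply_le_of_leftInvOn hα₁K.1 hα₁K.2.1 hα₁K.2.2.2 hα₁inv.1 (norm_nonneg (x t))
    ((hsandwich t (le_trans ht₀ ht) (x t)).1.trans hdecay)

/-- Theorem 1, Item 2: with time-independent class-`K∞` bounds
`α₁(|x|) ≤ V(t,x) ≤ α₂(|x|)` and `V̇ ≤ μ(t) V`, if `μ` is uniformly exponentially
stable with constants `α > 0`, `β ≥ 0`, then every solution satisfies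
`|x(t)| ≤ α₁⁻¹(α₂(|x(t₀)|) e^β e^{-α(t-t₀)})`; in particular the system is globally
uniformly asymptotically stable. -/
theorem stmt5 (tsharp : ℝ) (n : ℕ)
    (f : ℝ → EuclideanSpace ℝ (Fin n) → EuclideanSpace ℝ (Fin n))
    (hf_cont : Continuous fun p : ℝ × EuclideanSpace ℝ (Fin n) => f p.1 p.2)
    (hf_lip : ∀ t, LocallyLipschitz (f t))
    (hf0 : ∀ t ∈ Set.Ici tsharp, f t (0 : EuclideanSpace ℝ (Fin n)) = 0)
    (V : ℝ → EuclideanSpace ℝ (Fin n) → ℝ)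
    (hV_C1 : ContDiff ℝ 1 fun p : ℝ × EuclideanSpace ℝ (Fin n) => V p.1 p.2)
    (hV_nonneg : ∀ t ∈ Set.Ici tsharp, ∀ x : EuclideanSpace ℝ (Fin n), 0 ≤ V t x)
    (α₁ α₂ : ℝ → ℝ)
    (hα₁K : ContinuousOn α₁ (Set.Ici 0) ∧ StrictMonoOn α₁ (Set.Ici 0) ∧ α₁ 0 = 0 ∧
        Filter.Tendsto α₁ Filter.atTop Filter.atTop)
    (hα₂K : ContinuousOn α₂ (Set.Ici 0) ∧ StrictMonoOn α₂ (Set.Ici 0) ∧ α₂ 0 = 0 ∧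
        Filter.Tendsto α₂ Filter.atTop Filter.atTop)
    -- `α₁inv` is the inverse of `α₁` on `[0,∞)`
    (α₁inv : ℝ → ℝ)
    (hα₁inv : Set.InvOn α₁inv α₁ (Set.Ici 0) (Set.Ici 0))
    (μ : ℝ → ℝ)
    (hμ_int : ∀ a b : ℝ, IntervalIntegrable μ MeasureTheory.volume a b)
    (α β : ℝ) (hα : 0 < α) (hβ : 0 ≤ β)
    (hμ_ues : ∀ t₀ ∈ Set.Ici tsharp, ∀ t ≥ t₀,
        (∫ s in t₀..t, μ s) ≤ -α * (t - t₀) + β)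
    (hsandwich : ∀ t ∈ Set.Ici tsharp, ∀ x : EuclideanSpace ℝ (Fin n),
        α₁ ‖x‖ ≤ V t x ∧ V t x ≤ α₂ ‖x‖)
    (hderiv : ∀ t ∈ Set.Ici tsharp, ∀ x : EuclideanSpace ℝ (Fin n),
        (fderiv ℝ (fun p : ℝ × EuclideanSpace ℝ (Fin n) => V p.1 p.2) (t, x)) (1, f t x)
          ≤ μ t * V t x) :
    ∀ t₀ ∈ Set.Ici tsharp, ∀ x : ℝ → EuclideanSpace ℝ (Fin n),
      (∀ t ≥ t₀, HasDerivAt x (f t (x t)) t) →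
      ∀ t ≥ t₀, ‖x t‖ ≤ α₁inv (α₂ ‖x t₀‖ * Real.exp β * Real.exp (-α * (t - t₀))) :=
  stmt5_general tsharp n f V hV_C1 hV_nonneg α₁ α₂ hα₁K α₁inv hα₁inv μ hμ_int α β hμ_ues hsandwich
    hderiv
end

section
/- (Theorem 1, Item 4) Suppose there exist a continuously differentiable V : J × ℝⁿ → [0,∞), constants m > 0 and k₁, k₂ > 0, and a piecewise continuous μ : J → ℝ such that k₁|x|^m ≤ V(t,x) ≤ k₂|x|^m and ∂V/∂t(t,x) + ∇ₓV(t,x)·f(t,x) ≤ μ(t)V(t,x) for all (t,x) ∈ J × ℝⁿ. If μ is uniformly exponentially stable with constants α > 0 and β ≥ 0 (i.e., ∫_{t₀}^{t} μ(s) ds ≤ −α(t−t₀) + β for all t ≥ t₀ ∈ J), then every solution of ẋ = f(t,x) satisfies |x(t)| ≤ (k₂/k₁)^{1/m}·exp(β/m)·|x(t₀)|·exp(−(α/m)(t−t₀)) for all t ≥ t₀ ∈ J; in particular the system is globally uniformly exponentially stable. -/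
/-!
Along a solution `x`, the function `g s = V(s, x s)` is nonnegative and satisfies the
differential inequality `g' ≤ μ g`. Integrating `(log g)' ≤ μ` (after its last zero, a
nonnegative `g` stays positive) gives `g t ≤ g t₀ · exp ∫_{t₀}^{t} μ ≤ g t₀ · exp (β - α (t - t₀))`,
and the sandwich bounds on `V` turn this into the estimate on `‖x t‖` after taking `m`-th roots.
-/

open Filter MeasureTheory Set Real

section Gronwall

variable {g g' μ : ℝ → ℝ} {a b : ℝ}

theorem le_mul_exp_integral_of_deriv_le_mul_of_pos (hab : a ≤ b)
    (hg : ContinuousOn g (Icc a b)) (hderiv : ∀ t ∈ Ioo a b, HasDerivAt g (g' t) t)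
    (hμ : IntegrableOn μ (Icc a b)) (hpos : ∀ t ∈ Icc a b, 0 < g t)
    (hle : ∀ t ∈ Ioo a b, g' t ≤ μ t * g t) :
    g b ≤ g a * exp (∫ s in a..b, μ s) := by
  have hlog : log (g b) - log (g a) ≤ ∫ s in a..b, μ s := by
    refine intervalIntegral.sub_le_integral_of_hasDeriv_right_of_le hab
      (hg.log fun t ht => (hpos t ht).ne')
      (fun t ht => ((hderiv t ht).log (hpos t (Ioo_subset_Icc_self ht)).ne').hasDerivWithinAt)
      hμ fun t ht => ?_
    rw [div_le_iff₀ (hpos t (Ioo_subset_Icc_self ht))]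
    exact hle t ht
  have ha := hpos a (left_mem_Icc.2 hab)
  have hb := hpos b (right_mem_Icc.2 hab)
  calc g b = exp (log (g b)) := (exp_log hb).symm
    _ ≤ exp (log (g a) + ∫ s in a..b, μ s) := exp_le_exp.2 (by linarith)
    _ = g a * exp (∫ s in a..b, μ s) := by rw [exp_add, exp_log ha]

theorem le_mul_exp_integral_of_deriv_le_mul (hab : a ≤ b)
    (hg : ContinuousOn g (Icc a b)) (hderiv : ∀ t ∈ Ioo a b, HasDerivAt g (g' t) t)
    (hμ : IntegrableOn μ (Icc a b)) (hnonneg : ∀ t ∈ Icc a b, 0 ≤ g t)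
    (hle : ∀ t ∈ Ioo a b, g' t ≤ μ t * g t) :
    g b ≤ g a * exp (∫ s in a..b, μ s) := by
  have hpos_from : ∀ s ∈ Icc a b, (∀ t ∈ Icc s b, 0 < g t) →
      g b ≤ g s * exp (∫ u in s..b, μ u) := fun s hs hpos =>
    have hsub : Icc s b ⊆ Icc a b := Icc_subset_Icc_left hs.1
    le_mul_exp_integral_of_deriv_le_mul_of_pos hs.2 (hg.mono hsub)
      (fun t ht => hderiv t (Ioo_subset_Ioo_left hs.1 ht)) (hμ.mono_set hsub) hpos
      (fun t ht => hle t (Ioo_subset_Ioo_left hs.1 ht))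
  by_contra! hlt
  have hgb : 0 < g b := (mul_nonneg (hnonneg a (left_mem_Icc.2 hab)) (exp_pos _).le).trans_lt hlt
  set Z := Icc a b ∩ g ⁻¹' {0}
  rcases Z.eq_empty_or_nonempty with hZ | hZ
  · refine hlt.not_ge (hpos_from a (left_mem_Icc.2 hab) fun t ht => ?_)
    exact (hnonneg t ht).lt_of_ne fun h => hZ.subset ⟨ht, h.symm⟩
  have hZc : IsCompact Z :=
    isCompact_Icc.of_isClosed_subset (hg.preimage_isClosed_of_isClosed isClosed_Icc
      isClosed_singleton) inter_subset_left
  obtain ⟨τ, ⟨hτ, hgτ⟩, hτmax⟩ := hZc.exists_isGreatest hZ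
  have hτb : τ < b := hτ.2.lt_of_ne fun h => hgb.ne' (h ▸ hgτ)
  have hpos : ∀ t ∈ Ioc τ b, 0 < g t := fun t ht =>
    (hnonneg t ⟨hτ.1.trans ht.1.le, ht.2⟩).lt_of_ne fun h =>
      ht.1.not_ge (hτmax ⟨⟨hτ.1.trans ht.1.le, ht.2⟩, h.symm⟩)
  set G := fun s => g s * exp (∫ u in s..b, μ u)
  have hGc : ContinuousOn G (Icc a b) := by
    have := intervalIntegral.continuousOn_primitive_interval_left (a := a) (b := b)
      (μ := volume) (by rwa [uIcc_of_le hab])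
    rw [uIcc_of_le hab] at this
    exact hg.mul this.rexp
  -- the positive case on `[s, b]`, in the limit `s ↓ τ`
  have hGτ : g b ≤ G τ :=
    ContinuousWithinAt.closure_le (s := Ioc τ b) (by simp [closure_Ioc hτb.ne, hτb.le])
      continuousWithinAt_const ((hGc τ hτ).mono fun t ht => ⟨hτ.1.trans ht.1.le, ht.2⟩)
      fun s hs => hpos_from s ⟨hτ.1.trans hs.1.le, hs.2⟩ fun t ht =>
        hpos t ⟨hs.1.trans_le ht.1, ht.2⟩
  have : G τ = 0 := by simp [G, show g τ = 0 from hgτ]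
  linarith

end Gronwall

theorem le_rpow_mul_mul_exp_div_of_rpow_le {u v K c m : ℝ} (hu : 0 ≤ u) (hv : 0 ≤ v)
    (hK : 0 ≤ K) (hm : 0 < m) (h : u ^ m ≤ K * v ^ m * exp c) :
    u ≤ K ^ (1 / m) * v * exp (c / m) := by
  have hpow : (K ^ (1 / m) * v * exp (c / m)) ^ m = K * v ^ m * exp c := by
    rw [mul_rpow (by positivity) (exp_pos _).le, mul_rpow (by positivity) hv, ← rpow_mul hK,
      one_div_mul_cancel hm.ne', rpow_one, ← exp_mul, div_mul_cancel₀ _ hm.ne']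
  rw [← hpow] at h
  exact (rpow_le_rpow_iff hu (by positivity) hm).1 h

theorem stmt7_general (tsharp : ℝ) (n : ℕ)
    (f : ℝ → EuclideanSpace ℝ (Fin n) → EuclideanSpace ℝ (Fin n))
    (V : ℝ → EuclideanSpace ℝ (Fin n) → ℝ)
    (hV_C1 : ContDiff ℝ 1 fun p : ℝ × EuclideanSpace ℝ (Fin n) => V p.1 p.2)
    (hV_nonneg : ∀ t ∈ Set.Ici tsharp, ∀ x : EuclideanSpace ℝ (Fin n), 0 ≤ V t x)
    (m k₁ k₂ : ℝ) (hm : 0 < m) (hk₁ : 0 < k₁) (hk₂ : 0 < k₂)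
    (μ : ℝ → ℝ)
    (hμ_int : ∀ a b : ℝ, IntervalIntegrable μ MeasureTheory.volume a b)
    (hsandwich : ∀ t ∈ Set.Ici tsharp, ∀ x : EuclideanSpace ℝ (Fin n),
        k₁ * ‖x‖ ^ m ≤ V t x ∧ V t x ≤ k₂ * ‖x‖ ^ m)
    (hderiv : ∀ t ∈ Set.Ici tsharp, ∀ x : EuclideanSpace ℝ (Fin n),
        (fderiv ℝ (fun p : ℝ × EuclideanSpace ℝ (Fin n) => V p.1 p.2) (t, x)) (1, f t x)
          ≤ μ t * V t x)
    (α β : ℝ)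
    (hμ_ues : ∀ t₀ ∈ Set.Ici tsharp, ∀ t ≥ t₀,
        (∫ s in t₀..t, μ s) ≤ -α * (t - t₀) + β) :
    ∀ t₀ ∈ Set.Ici tsharp, ∀ x : ℝ → EuclideanSpace ℝ (Fin n),
      (∀ t ≥ t₀, HasDerivAt x (f t (x t)) t) →
      ∀ t ≥ t₀, ‖x t‖ ≤ (k₂ / k₁) ^ (1 / m) * Real.exp (β / m) * ‖x t₀‖ *
        Real.exp (-(α / m) * (t - t₀)) := by
  intro t₀ ht₀ x hx t ht
  have hJ : ∀ s ∈ Icc t₀ t, s ∈ Ici tsharp := fun s hs => ht₀.trans hs.1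
  set g := fun s => V s (x s)
  have hg : ∀ s ≥ t₀, HasDerivAt g
      (fderiv ℝ (fun p : ℝ × EuclideanSpace ℝ (Fin n) => V p.1 p.2) (s, x s)
        (1, f s (x s))) s :=
    fun s hs => (hV_C1.differentiable one_ne_zero _).hasFDerivAt.comp_hasDerivAt s
      ((hasDerivAt_id s).prodMk (hx s hs))
  have hgronwall : g t ≤ g t₀ * exp (∫ s in t₀..t, μ s) :=
    le_mul_exp_integral_of_deriv_le_mul ht
      (fun s hs => (hg s hs.1).continuousAt.continuousWithinAt) (fun s hs => hg s hs.1.le)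
      ((intervalIntegrable_iff_integrableOn_Icc_of_le ht).1 (hμ_int t₀ t))
      (fun s hs => hV_nonneg s (hJ s hs) (x s))
      (fun s hs => hderiv s (hJ s (Ioo_subset_Icc_self hs)) (x s))
  have hpow : ‖x t‖ ^ m ≤ k₂ / k₁ * ‖x t₀‖ ^ m * exp (-α * (t - t₀) + β) := by
    rw [div_mul_eq_mul_div, div_mul_eq_mul_div, le_div_iff₀ hk₁, mul_comm _ k₁]
    calc k₁ * ‖x t‖ ^ m ≤ g t := (hsandwich t (hJ t (right_mem_Icc.2 ht)) (x t)).1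
      _ ≤ g t₀ * exp (∫ s in t₀..t, μ s) := hgronwall
      _ ≤ k₂ * ‖x t₀‖ ^ m * exp (-α * (t - t₀) + β) :=
        mul_le_mul (hsandwich t₀ ht₀ (x t₀)).2 (exp_le_exp.2 (hμ_ues t₀ ht₀ t ht))
          (exp_pos _).le (by positivity)
  refine (le_rpow_mul_mul_exp_div_of_rpow_le (norm_nonneg _) (norm_nonneg _)
    (div_pos hk₂ hk₁).le hm hpow).trans_eq ?_
  rw [show (-α * (t - t₀) + β) / m = β / m + -(α / m) * (t - t₀) by ring, exp_add]
  ring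

/-- Theorem 1, Item 4: with bounds `k₁|x|^m ≤ V(t,x) ≤ k₂|x|^m`
(constants `k₁, k₂ > 0`, `m > 0`) and `V̇ ≤ μ(t) V`, if `μ` is uniformly
exponentially stable with constants `α > 0`, `β ≥ 0`, then every solution satisfies
`|x(t)| ≤ (k₂/k₁)^{1/m} e^{β/m} |x(t₀)| e^{-(α/m)(t-t₀)}`; in particular the system
is globally uniformly exponentially stable. -/
theorem stmt7 (tsharp : ℝ) (n : ℕ)
    (f : ℝ → EuclideanSpace ℝ (Fin n) → EuclideanSpace ℝ (Fin n))
    (hf_cont : Continuous fun p : ℝ × EuclideanSpace ℝ (Fin n) => f p.1 p.2)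
    (hf_lip : ∀ t, LocallyLipschitz (f t))
    (hf0 : ∀ t ∈ Set.Ici tsharp, f t (0 : EuclideanSpace ℝ (Fin n)) = 0)
    (V : ℝ → EuclideanSpace ℝ (Fin n) → ℝ)
    (hV_C1 : ContDiff ℝ 1 fun p : ℝ × EuclideanSpace ℝ (Fin n) => V p.1 p.2)
    (hV_nonneg : ∀ t ∈ Set.Ici tsharp, ∀ x : EuclideanSpace ℝ (Fin n), 0 ≤ V t x)
    (m k₁ k₂ : ℝ) (hm : 0 < m) (hk₁ : 0 < k₁) (hk₂ : 0 < k₂)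
    (μ : ℝ → ℝ)
    (hμ_int : ∀ a b : ℝ, IntervalIntegrable μ MeasureTheory.volume a b)
    (hsandwich : ∀ t ∈ Set.Ici tsharp, ∀ x : EuclideanSpace ℝ (Fin n),
        k₁ * ‖x‖ ^ m ≤ V t x ∧ V t x ≤ k₂ * ‖x‖ ^ m)
    (hderiv : ∀ t ∈ Set.Ici tsharp, ∀ x : EuclideanSpace ℝ (Fin n),
        (fderiv ℝ (fun p : ℝ × EuclideanSpace ℝ (Fin n) => V p.1 p.2) (t, x)) (1, f t x)
          ≤ μ t * V t x)
    (α β : ℝ) (hα : 0 < α) (hβ : 0 ≤ β)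
    (hμ_ues : ∀ t₀ ∈ Set.Ici tsharp, ∀ t ≥ t₀,
        (∫ s in t₀..t, μ s) ≤ -α * (t - t₀) + β) :
    ∀ t₀ ∈ Set.Ici tsharp, ∀ x : ℝ → EuclideanSpace ℝ (Fin n),
      (∀ t ≥ t₀, HasDerivAt x (f t (x t)) t) →
      ∀ t ≥ t₀, ‖x t‖ ≤ (k₂ / k₁) ^ (1 / m) * Real.exp (β / m) * ‖x t₀‖ *
        Real.exp (-(α / m) * (t - t₀)) :=
  stmt7_general tsharp n f V hV_C1 hV_nonneg m k₁ k₂ hm hk₁ hk₂ μ hμ_int hsandwich hderiv α β hμ_ues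
end
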